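/- arXiv:math/0503036 — 10 statements merged into one kernel-verified Lean document; each statement's English description precedes it below -/
import Mathlib

section
/- Let V : ℝ → ℝ be any function, ρ_j > 0, and ε ≥ 0. Then sup{ρ·V((1+ε)ρ) : ρ ∈ [0, ρ_j/(1+ε)]} = (1/(1+ε))·sup{r·V(r) : r ∈ [0, ρ_j]}. In particular, the capacity of a road with lane-changing intensity ε equals 1/(1+ε) times the capacity without lane changes, a capacity reduction by the factor 1 − 1/(1+ε). -/
/- Substituting `r = (1 + ε) ρ` maps `[0, ρ_j / (1 + ε)]` onto `[0, ρ_j]` and turns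
`ρ V((1 + ε) ρ)` into `r V(r) / (1 + ε)`; a positive factor commutes with the supremum. -/

open Set
open scoped Pointwise

theorem image_mul_apply_mul_left_eq_inv_smul {K : Type*} [Field K] (f : K → K) {c : K}
    (hc : c ≠ 0) (s : Set K) :
    (fun x => x * f (c * x)) '' s = c⁻¹ • (fun y => y * f y) '' ((c * ·) '' s) := by
  simp only [← image_smul, image_image, smul_eq_mul]
  refine image_congr fun x _ => ?_
  rw [← mul_assoc, ← mul_assoc, inv_mul_cancel₀ hc, one_mul]

theorem image_mul_left_Icc_zero_div {K : Type*} [Field K] [LinearOrder K] [IsStrictOrderedRing K]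
    {c : K} (hc : 0 < c) (a : K) : (c * ·) '' Icc 0 (a / c) = Icc 0 a := by
  rw [image_mul_left_Icc' hc, mul_zero, mul_div_cancel₀ a hc.ne']

theorem Real.sSup_image_mul_apply_mul_left_Icc (f : ℝ → ℝ) {c : ℝ} (hc : 0 < c) (a : ℝ) :
    sSup ((fun x => x * f (c * x)) '' Icc 0 (a / c)) =
      c⁻¹ * sSup ((fun y => y * f y) '' Icc 0 a) := by
  rw [image_mul_apply_mul_left_eq_inv_smul f hc.ne', image_mul_left_Icc_zero_div hc,
    Real.sSup_smul_of_nonneg (inv_nonneg.mpr hc.le), smul_eq_mul]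

theorem capacity_reduction_general
    (V : ℝ → ℝ) (ρ_j : ℝ) (ε : ℝ) (hε : 0 ≤ ε) :
    sSup ((fun ρ : ℝ => ρ * V ((1 + ε) * ρ)) '' Set.Icc 0 (ρ_j / (1 + ε))) =
      (1 / (1 + ε)) * sSup ((fun r : ℝ => r * V r) '' Set.Icc 0 ρ_j) := by
  rw [one_div]
  exact Real.sSup_image_mul_apply_mul_left_Icc V (by linarith) ρ_j

/-- For any speed-density function `V`, jam density `ρ_j > 0` and lane-changing intensity
`ε ≥ 0`, the capacity with lane-changing, `sup {ρ·V((1+ε)ρ) : ρ ∈ [0, ρ_j/(1+ε)]}`, equals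
`1/(1+ε)` times the capacity without lane changes, `sup {r·V(r) : r ∈ [0, ρ_j]}`. -/
theorem capacity_reduction
    (V : ℝ → ℝ) (ρ_j : ℝ) (hρj : 0 < ρ_j) (ε : ℝ) (hε : 0 ≤ ε) :
    sSup ((fun ρ : ℝ => ρ * V ((1 + ε) * ρ)) '' Set.Icc 0 (ρ_j / (1 + ε))) =
      (1 / (1 + ε)) * sSup ((fun r : ℝ => r * V r) '' Set.Icc 0 ρ_j) :=
  capacity_reduction_general V ρ_j ε hε
end

section
/- Let v_f > 0, 0 < ρ_c < ρ_j, and let V be the triangular speed-density function defined by V(ρ) = v_f for 0 ≤ ρ ≤ ρ_c and V(ρ) = (ρ_c/(ρ_j − ρ_c))·v_f·(ρ_j − ρ)/ρ for ρ_c < ρ ≤ ρ_j. Then for every ε ≥ 0, the flow-rate Q(ε, ρ) = ρ·V((1+ε)ρ) attains its maximum over ρ ∈ [0, ρ_j/(1+ε)] at ρ = ρ_c/(1+ε), and this maximum equals v_f·ρ_c/(1+ε); in particular constant lane-changing intensity ε reduces the capacity from v_f·ρ_c to v_f·ρ_c/(1+ε). -/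
/-!
Writing `k = 1 + ε`, the flow `Q(ε, ρ) = ρ·V(kρ)` is `q(kρ)/k` with `q(x) = x·V(x)` the flow
without lane changing, so it suffices to bound `q` on `[0, ρ_j]`. On the free-flow branch `q` is
`v_f·x ≤ v_f·ρ_c`; on the congested branch it is the decreasing line through `(ρ_c, v_f·ρ_c)` and
`(ρ_j, 0)`. Hence `q ≤ v_f·ρ_c`, with equality at `x = ρ_c`.
-/

section TriangularFlow

variable {v_f ρ_c ρ_j : ℝ} {V : ℝ → ℝ}

theorem triangular_flow_congested
    (hV2 : ∀ ρ : ℝ, ρ_c < ρ → ρ ≤ ρ_j → V ρ = ρ_c / (ρ_j - ρ_c) * v_f * ((ρ_j - ρ) / ρ))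
    {x : ℝ} (hx : x ≠ 0) (hcx : ρ_c < x) (hxj : x ≤ ρ_j) :
    x * V x = ρ_c / (ρ_j - ρ_c) * v_f * (ρ_j - x) := by
  rw [hV2 x hcx hxj, mul_left_comm, mul_div_cancel₀ _ hx]

theorem triangular_flow_le_capacity (hvf : 0 ≤ v_f) (hρc : 0 ≤ ρ_c) (hρcj : ρ_c < ρ_j)
    (hV1 : ∀ ρ : ℝ, 0 ≤ ρ → ρ ≤ ρ_c → V ρ = v_f)
    (hV2 : ∀ ρ : ℝ, ρ_c < ρ → ρ ≤ ρ_j → V ρ = ρ_c / (ρ_j - ρ_c) * v_f * ((ρ_j - ρ) / ρ))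
    {x : ℝ} (hx : 0 ≤ x) (hxj : x ≤ ρ_j) :
    x * V x ≤ v_f * ρ_c := by
  rcases le_or_gt x ρ_c with hxc | hcx
  · rw [hV1 x hx hxc, mul_comm]
    exact mul_le_mul_of_nonneg_left hxc hvf
  · have hjc : 0 < ρ_j - ρ_c := sub_pos.mpr hρcj
    calc x * V x = ρ_c / (ρ_j - ρ_c) * v_f * (ρ_j - x) :=
          triangular_flow_congested hV2 (hρc.trans_lt hcx).ne' hcx hxj
      _ ≤ ρ_c / (ρ_j - ρ_c) * v_f * (ρ_j - ρ_c) := by gcongr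
      _ = v_f * ρ_c := by field_simp

end TriangularFlow

/-- For the triangular fundamental diagram with free-flow speed `v_f`, critical density
`ρ_c`, and jam density `ρ_j`, and for any lane-changing intensity `ε ≥ 0`, the flow-rate
`Q(ε, ρ) = ρ·V((1+ε)ρ)` attains its maximum over `[0, ρ_j/(1+ε)]` at `ρ = ρ_c/(1+ε)`,
and this maximum equals `v_f·ρ_c/(1+ε)`. -/
theorem triangular_capacity
    (v_f ρ_c ρ_j : ℝ) (hvf : 0 < v_f) (hρc : 0 < ρ_c) (hρcj : ρ_c < ρ_j)
    (V : ℝ → ℝ)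
    (hV1 : ∀ ρ : ℝ, 0 ≤ ρ → ρ ≤ ρ_c → V ρ = v_f)
    (hV2 : ∀ ρ : ℝ, ρ_c < ρ → ρ ≤ ρ_j → V ρ = ρ_c / (ρ_j - ρ_c) * v_f * ((ρ_j - ρ) / ρ))
    (Q : ℝ → ℝ → ℝ) (hQ : ∀ ε ρ, Q ε ρ = ρ * V ((1 + ε) * ρ))
    (ε : ℝ) (hε : 0 ≤ ε) :
    (∀ ρ ∈ Set.Icc 0 (ρ_j / (1 + ε)), Q ε ρ ≤ Q ε (ρ_c / (1 + ε))) ∧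
    Q ε (ρ_c / (1 + ε)) = v_f * ρ_c / (1 + ε) := by
  have hk : 0 < 1 + ε := by linarith
  have hrescale : ∀ ρ, Q ε ρ = (1 + ε) * ρ * V ((1 + ε) * ρ) / (1 + ε) := fun ρ => by
    rw [hQ]; field_simp
  have hpeak : Q ε (ρ_c / (1 + ε)) = v_f * ρ_c / (1 + ε) := by
    rw [hrescale, mul_div_cancel₀ _ hk.ne', hV1 ρ_c hρc.le le_rfl, mul_comm]
  refine ⟨fun ρ ⟨hρ0, hρj⟩ => ?_, hpeak⟩
  rw [hpeak, hrescale]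
  exact div_le_div_of_nonneg_right (triangular_flow_le_capacity hvf.le hρc.le hρcj hV1 hV2
    (by positivity) ((le_div_iff₀' hk).mp hρj)) hk.le
end

section
/- (Boundary flux for Riemann problem of Type 1.) If ρ_L ≤ Γ(ε_L), ρ_R ≤ Γ(ε_R), and Q(ε_R, ρ_R) ≤ Q(ε_L, ρ_L) ≤ cap(ε_R), then min{D(ε_L, ρ_L), S(ε_R, ρ_R)} = Q(ε_L, ρ_L). -/
theorem riemann_flux_type1
    (v_f ρ_j ρ_c : ℝ) (hvf : 0 < v_f) (hρj : 0 < ρ_j) (hρc : ρ_c ∈ Set.Ioo 0 ρ_j)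
    (V : ℝ → ℝ) (hVcont : Continuous V) (hV0 : V 0 = v_f) (hVj : V ρ_j = 0)
    (hmono : MonotoneOn (fun r : ℝ => r * V r) (Set.Icc 0 ρ_c))
    (hanti : AntitoneOn (fun r : ℝ => r * V r) (Set.Icc ρ_c ρ_j))
    (Q : ℝ → ℝ → ℝ) (hQ : ∀ ε ρ, Q ε ρ = ρ * V ((1 + ε) * ρ))
    (Γ : ℝ → ℝ) (hΓ : ∀ ε, Γ ε = ρ_c / (1 + ε))
    (cap : ℝ → ℝ) (hcap : ∀ ε, cap ε = Q ε (Γ ε))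
    (S D : ℝ → ℝ → ℝ)
    (hS : ∀ ε ρ, S ε ρ = sSup (Q ε '' Set.Icc ρ (ρ_j / (1 + ε))))
    (hD : ∀ ε ρ, D ε ρ = sSup (Q ε '' Set.Icc 0 ρ))
    (ε_L ε_R ρ_L ρ_R : ℝ) (hεL : 0 ≤ ε_L) (hεR : 0 ≤ ε_R)
    (hρL : ρ_L ∈ Set.Icc 0 (ρ_j / (1 + ε_L))) (hρR : ρ_R ∈ Set.Icc 0 (ρ_j / (1 + ε_R)))
    (h1 : ρ_L ≤ Γ ε_L) (h2 : ρ_R ≤ Γ ε_R)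
    (h3 : Q ε_R ρ_R ≤ Q ε_L ρ_L) (h4 : Q ε_L ρ_L ≤ cap ε_R) :
    min (D ε_L ρ_L) (S ε_R ρ_R) = Q ε_L ρ_L := by
  have hεL1 : (0:ℝ) < 1 + ε_L := by linarith
  have hεR1 : (0:ℝ) < 1 + ε_R := by linarith
  have monoQ : ∀ ε a b, 0 < 1 + ε → 0 ≤ a → a ≤ b → b ≤ ρ_c / (1 + ε) →
      Q ε a ≤ Q ε b := by
    intro ε a b hε ha hab hb
    rw [hQ, hQ]
    have hb' : b * (1 + ε) ≤ ρ_c := (le_div_iff₀ hε).mp hb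
    have hma : (1 + ε) * a ∈ Set.Icc 0 ρ_c :=
      ⟨by positivity, by nlinarith⟩
    have hmb : (1 + ε) * b ∈ Set.Icc 0 ρ_c :=
      ⟨by nlinarith, by nlinarith⟩
    have := hmono hma hmb (by nlinarith)
    simp only at this
    nlinarith
  have antiQ : ∀ ε a b, 0 < 1 + ε → ρ_c / (1 + ε) ≤ a → a ≤ b → b ≤ ρ_j / (1 + ε) →
      Q ε b ≤ Q ε a := by
    intro ε a b hε ha hab hb
    rw [hQ, hQ]
    have ha' : ρ_c ≤ a * (1 + ε) := (div_le_iff₀ hε).mp ha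
    have hb' : b * (1 + ε) ≤ ρ_j := (le_div_iff₀ hε).mp hb
    have hma : (1 + ε) * a ∈ Set.Icc ρ_c ρ_j := ⟨by nlinarith, by nlinarith⟩
    have hmb : (1 + ε) * b ∈ Set.Icc ρ_c ρ_j := ⟨by nlinarith, by nlinarith⟩
    have := hanti hma hmb (by nlinarith)
    simp only at this
    nlinarith
  have h1' : ρ_L ≤ ρ_c / (1 + ε_L) := by rw [← hΓ]; exact h1
  have h2' : ρ_R ≤ ρ_c / (1 + ε_R) := by rw [← hΓ]; exact h2
  have hΓR : Γ ε_R ≤ ρ_j / (1 + ε_R) := by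
    rw [hΓ]
    gcongr
    exact hρc.2.le
  have hD_eq : D ε_L ρ_L = Q ε_L ρ_L := by
    rw [hD]
    apply IsGreatest.csSup_eq
    constructor
    · exact ⟨ρ_L, ⟨hρL.1, le_refl _⟩, rfl⟩
    · rintro x ⟨ρ, ⟨h0, hρ⟩, rfl⟩
      exact monoQ ε_L ρ ρ_L hεL1 h0 hρ h1'
  have hS_eq : S ε_R ρ_R = cap ε_R := by
    rw [hS, hcap]
    apply IsGreatest.csSup_eq
    constructor
    · exact ⟨Γ ε_R, ⟨h2, hΓR⟩, rfl⟩
    · rintro x ⟨ρ, ⟨ha, hb⟩, rfl⟩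
      by_cases hc : ρ ≤ Γ ε_R
      · exact monoQ ε_R ρ (Γ ε_R) hεR1 (hρR.1.trans ha) hc (le_of_eq (hΓ ε_R))
      · push_neg at hc
        refine antiQ ε_R (Γ ε_R) ρ hεR1 (le_of_eq (hΓ ε_R).symm) hc.le hb
  rw [hD_eq, hS_eq]
  exact min_eq_left h4
end

section
/- (Boundary flux for Riemann problem of Type 3.) If ρ_L ≤ Γ(ε_L), ρ_R > Γ(ε_R), and Q(ε_R, ρ_R) ≤ Q(ε_L, ρ_L), then min{D(ε_L, ρ_L), S(ε_R, ρ_R)} = Q(ε_R, ρ_R). -/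
/-!
Since `Q(ε, ρ) = Q̄((1 + ε) ρ) / (1 + ε)`, the flux `Q(ε, ·)` is nondecreasing on `[0, Γ(ε)]`
and nonincreasing on `[Γ(ε), ρ_j / (1 + ε)]`. Hence for an under-critical left state the demand
is attained at `ρ_L` itself, and for an over-critical right state the supply is attained at `ρ_R`
itself, so the minimum is `min (Q(ε_L, ρ_L), Q(ε_R, ρ_R)) = Q(ε_R, ρ_R)`.
-/

open Set

lemma mapsTo_const_mul_Icc_div {a b c : ℝ} (hc : 0 < c) :
    MapsTo (c * ·) (Icc (a / c) (b / c)) (Icc a b) := fun x hx => by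
  rwa [← preimage_const_mul_Icc₀ a b hc] at hx

lemma MonotoneOn.mul_comp_const_mul {V : ℝ → ℝ} {a b c : ℝ} (hc : 0 < c)
    (h : MonotoneOn (fun r => r * V r) (Icc a b)) :
    MonotoneOn (fun ρ => ρ * V (c * ρ)) (Icc (a / c) (b / c)) := by
  intro x hx y hy hxy
  have hcxy : c * x * V (c * x) ≤ c * y * V (c * y) :=
    h (mapsTo_const_mul_Icc_div hc hx) (mapsTo_const_mul_Icc_div hc hy) (mul_le_mul_of_nonneg_left hxy hc.le)
  rw [mul_assoc, mul_assoc] at hcxy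
  exact le_of_mul_le_mul_left hcxy hc

lemma AntitoneOn.mul_comp_const_mul {V : ℝ → ℝ} {a b c : ℝ} (hc : 0 < c)
    (h : AntitoneOn (fun r => r * V r) (Icc a b)) :
    AntitoneOn (fun ρ => ρ * V (c * ρ)) (Icc (a / c) (b / c)) := by
  intro x hx y hy hxy
  have hcxy : c * y * V (c * y) ≤ c * x * V (c * x) :=
    h (mapsTo_const_mul_Icc_div hc hx) (mapsTo_const_mul_Icc_div hc hy) (mul_le_mul_of_nonneg_left hxy hc.le)
  rw [mul_assoc, mul_assoc] at hcxy
  exact le_of_mul_le_mul_left hcxy hc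

theorem riemann_flux_type3_general
    (ρ_j ρ_c : ℝ)
    (V : ℝ → ℝ)
    (hmono : MonotoneOn (fun r : ℝ => r * V r) (Set.Icc 0 ρ_c))
    (hanti : AntitoneOn (fun r : ℝ => r * V r) (Set.Icc ρ_c ρ_j))
    (Q : ℝ → ℝ → ℝ) (hQ : ∀ ε ρ, Q ε ρ = ρ * V ((1 + ε) * ρ))
    (Γ : ℝ → ℝ) (hΓ : ∀ ε, Γ ε = ρ_c / (1 + ε))
    (S D : ℝ → ℝ → ℝ)
    (hS : ∀ ε ρ, S ε ρ = sSup (Q ε '' Set.Icc ρ (ρ_j / (1 + ε))))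
    (hD : ∀ ε ρ, D ε ρ = sSup (Q ε '' Set.Icc 0 ρ))
    (ε_L ε_R ρ_L ρ_R : ℝ) (hεL : 0 ≤ ε_L) (hεR : 0 ≤ ε_R)
    (hρL : ρ_L ∈ Set.Icc 0 (ρ_j / (1 + ε_L))) (hρR : ρ_R ∈ Set.Icc 0 (ρ_j / (1 + ε_R)))
    (h1 : ρ_L ≤ Γ ε_L) (h2 : Γ ε_R < ρ_R) (h3 : Q ε_R ρ_R ≤ Q ε_L ρ_L) :
    min (D ε_L ρ_L) (S ε_R ρ_R) = Q ε_R ρ_R := by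
  rw [hΓ] at h1 h2
  have hQ_fun : ∀ ε, Q ε = fun ρ => ρ * V ((1 + ε) * ρ) := fun ε => funext (hQ ε)
  have hQL_mono : MonotoneOn (Q ε_L) (Icc 0 ρ_L) := by
    have h := hmono.mul_comp_const_mul (c := 1 + ε_L) (by linarith)
    rw [zero_div] at h
    exact hQ_fun ε_L ▸ h.mono (Icc_subset_Icc_right h1)
  have hQR_anti : AntitoneOn (Q ε_R) (Icc ρ_R (ρ_j / (1 + ε_R))) := by
    have h := hanti.mul_comp_const_mul (c := 1 + ε_R) (by linarith)
    exact hQ_fun ε_R ▸ h.mono (Icc_subset_Icc_left h2.le)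
  have hD_eq : D ε_L ρ_L = Q ε_L ρ_L :=
    (hD _ _).trans (hQL_mono.map_isGreatest (isGreatest_Icc hρL.1)).csSup_eq
  have hS_eq : S ε_R ρ_R = Q ε_R ρ_R :=
    (hS _ _).trans (hQR_anti.map_isLeast (isLeast_Icc hρR.2)).csSup_eq
  rw [hD_eq, hS_eq, min_eq_right h3]

theorem riemann_flux_type3
    (v_f ρ_j ρ_c : ℝ) (hvf : 0 < v_f) (hρj : 0 < ρ_j) (hρc : ρ_c ∈ Set.Ioo 0 ρ_j)
    (V : ℝ → ℝ) (hVcont : Continuous V) (hV0 : V 0 = v_f) (hVj : V ρ_j = 0)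
    (hmono : MonotoneOn (fun r : ℝ => r * V r) (Set.Icc 0 ρ_c))
    (hanti : AntitoneOn (fun r : ℝ => r * V r) (Set.Icc ρ_c ρ_j))
    (Q : ℝ → ℝ → ℝ) (hQ : ∀ ε ρ, Q ε ρ = ρ * V ((1 + ε) * ρ))
    (Γ : ℝ → ℝ) (hΓ : ∀ ε, Γ ε = ρ_c / (1 + ε))
    (cap : ℝ → ℝ) (hcap : ∀ ε, cap ε = Q ε (Γ ε))
    (S D : ℝ → ℝ → ℝ)
    (hS : ∀ ε ρ, S ε ρ = sSup (Q ε '' Set.Icc ρ (ρ_j / (1 + ε))))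
    (hD : ∀ ε ρ, D ε ρ = sSup (Q ε '' Set.Icc 0 ρ))
    (ε_L ε_R ρ_L ρ_R : ℝ) (hεL : 0 ≤ ε_L) (hεR : 0 ≤ ε_R)
    (hρL : ρ_L ∈ Set.Icc 0 (ρ_j / (1 + ε_L))) (hρR : ρ_R ∈ Set.Icc 0 (ρ_j / (1 + ε_R)))
    (h1 : ρ_L ≤ Γ ε_L) (h2 : Γ ε_R < ρ_R) (h3 : Q ε_R ρ_R ≤ Q ε_L ρ_L) :
    min (D ε_L ρ_L) (S ε_R ρ_R) = Q ε_R ρ_R :=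
  riemann_flux_type3_general ρ_j ρ_c V hmono hanti Q hQ Γ hΓ S D hS hD ε_L ε_R ρ_L ρ_R hεL hεR hρL
    hρR h1 h2 h3
end

section
/- (Boundary flux for Riemann problem of Type 4.) If ρ_L ≤ Γ(ε_L), ρ_R ≤ Γ(ε_R), and cap(ε_R) < Q(ε_L, ρ_L), then min{D(ε_L, ρ_L), S(ε_R, ρ_R)} = cap(ε_R). -/
theorem riemann_flux_type4
    (v_f ρ_j ρ_c : ℝ) (hvf : 0 < v_f) (hρj : 0 < ρ_j) (hρc : ρ_c ∈ Set.Ioo 0 ρ_j)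
    (V : ℝ → ℝ) (hVcont : Continuous V) (hV0 : V 0 = v_f) (hVj : V ρ_j = 0)
    (hmono : MonotoneOn (fun r : ℝ => r * V r) (Set.Icc 0 ρ_c))
    (hanti : AntitoneOn (fun r : ℝ => r * V r) (Set.Icc ρ_c ρ_j))
    (Q : ℝ → ℝ → ℝ) (hQ : ∀ ε ρ, Q ε ρ = ρ * V ((1 + ε) * ρ))
    (Γ : ℝ → ℝ) (hΓ : ∀ ε, Γ ε = ρ_c / (1 + ε))
    (cap : ℝ → ℝ) (hcap : ∀ ε, cap ε = Q ε (Γ ε))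
    (S D : ℝ → ℝ → ℝ)
    (hS : ∀ ε ρ, S ε ρ = sSup (Q ε '' Set.Icc ρ (ρ_j / (1 + ε))))
    (hD : ∀ ε ρ, D ε ρ = sSup (Q ε '' Set.Icc 0 ρ))
    (ε_L ε_R ρ_L ρ_R : ℝ) (hεL : 0 ≤ ε_L) (hεR : 0 ≤ ε_R)
    (hρL : ρ_L ∈ Set.Icc 0 (ρ_j / (1 + ε_L))) (hρR : ρ_R ∈ Set.Icc 0 (ρ_j / (1 + ε_R)))
    (h1 : ρ_L ≤ Γ ε_L) (h2 : ρ_R ≤ Γ ε_R) (h3 : cap ε_R < Q ε_L ρ_L) :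
    min (D ε_L ρ_L) (S ε_R ρ_R) = cap ε_R := by
  obtain ⟨hρc0, hρcj⟩ := hρc
  have hL1 : (0:ℝ) < 1 + ε_L := by linarith
  have hR1 : (0:ℝ) < 1 + ε_R := by linarith
  have mono : ∀ ε, (0:ℝ) < 1 + ε → ∀ a b : ℝ, 0 ≤ a → a ≤ b → b ≤ Γ ε →
      Q ε a ≤ Q ε b := by
    intro ε hε a b ha hab hb
    rw [hΓ] at hb
    have hb' : (1 + ε) * b ≤ ρ_c := by
      rw [mul_comm]
      exact (le_div_iff₀ hε).mp hb
    have h := hmono (Set.mem_Icc.mpr ⟨by positivity, by nlinarith⟩)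
      (Set.mem_Icc.mpr ⟨by nlinarith, hb'⟩)
      (by nlinarith : (1 + ε) * a ≤ (1 + ε) * b)
    simp only at h
    rw [hQ, hQ]
    nlinarith [h, hε]
  have anti : ∀ ε, (0:ℝ) < 1 + ε → ∀ b : ℝ, Γ ε ≤ b → b ≤ ρ_j / (1 + ε) →
      Q ε b ≤ Q ε (Γ ε) := by
    intro ε hε b hb1 hb2
    have hΓε : (1 + ε) * Γ ε = ρ_c := by
      rw [hΓ]; field_simp
    have hb1' : ρ_c ≤ (1 + ε) * b := by
      rw [← hΓε]; nlinarith
    have hb2' : (1 + ε) * b ≤ ρ_j := by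
      rw [mul_comm]
      exact (le_div_iff₀ hε).mp hb2
    have h := hanti (Set.mem_Icc.mpr ⟨le_refl _, by linarith⟩)
      (Set.mem_Icc.mpr ⟨hb1', hb2'⟩) hb1'
    simp only at h
    rw [hQ, hQ, hΓε]
    have e1 : (1 + ε) * (Γ ε * V ρ_c) = ρ_c * V ρ_c := by
      rw [← hΓε]; ring
    refine le_of_mul_le_mul_left ?_ hε
    rw [e1]
    nlinarith [h]
  have hDval : D ε_L ρ_L = Q ε_L ρ_L := by
    rw [hD]
    apply IsGreatest.csSup_eq
    constructor
    · exact ⟨ρ_L, Set.mem_Icc.mpr ⟨hρL.1, le_refl _⟩, rfl⟩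
    · rintro _ ⟨r, hr, rfl⟩
      obtain ⟨hr0, hr1⟩ := Set.mem_Icc.mp hr
      exact mono ε_L hL1 r ρ_L hr0 hr1 h1
  have hSval : S ε_R ρ_R = cap ε_R := by
    rw [hS, hcap]
    apply IsGreatest.csSup_eq
    constructor
    · refine ⟨Γ ε_R, Set.mem_Icc.mpr ⟨h2, ?_⟩, rfl⟩
      rw [hΓ]
      exact div_le_div_of_nonneg_right hρcj.le hR1.le
    · rintro _ ⟨r, hr, rfl⟩
      obtain ⟨hr0, hr1⟩ := Set.mem_Icc.mp hr
      by_cases hc : r ≤ Γ ε_R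
      · exact mono ε_R hR1 r (Γ ε_R) (le_trans hρR.1 hr0) hc (le_refl _)
      · exact anti ε_R hR1 r (le_of_not_ge hc) hr1
  rw [hDval, hSval]
  exact min_eq_right h3.le
end

section
/- (Boundary flux for Riemann problem of Type 5.) If ρ_L > Γ(ε_L), ρ_R > Γ(ε_R), and Q(ε_R, ρ_R) ≤ Q(ε_L, ρ_L), then min{D(ε_L, ρ_L), S(ε_R, ρ_R)} = Q(ε_R, ρ_R). -/
theorem riemann_flux_type5
    (v_f ρ_j ρ_c : ℝ) (hvf : 0 < v_f) (hρj : 0 < ρ_j) (hρc : ρ_c ∈ Set.Ioo 0 ρ_j)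
    (V : ℝ → ℝ) (hVcont : Continuous V) (hV0 : V 0 = v_f) (hVj : V ρ_j = 0)
    (hmono : MonotoneOn (fun r : ℝ => r * V r) (Set.Icc 0 ρ_c))
    (hanti : AntitoneOn (fun r : ℝ => r * V r) (Set.Icc ρ_c ρ_j))
    (Q : ℝ → ℝ → ℝ) (hQ : ∀ ε ρ, Q ε ρ = ρ * V ((1 + ε) * ρ))
    (Γ : ℝ → ℝ) (hΓ : ∀ ε, Γ ε = ρ_c / (1 + ε))
    (cap : ℝ → ℝ) (hcap : ∀ ε, cap ε = Q ε (Γ ε))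
    (S D : ℝ → ℝ → ℝ)
    (hS : ∀ ε ρ, S ε ρ = sSup (Q ε '' Set.Icc ρ (ρ_j / (1 + ε))))
    (hD : ∀ ε ρ, D ε ρ = sSup (Q ε '' Set.Icc 0 ρ))
    (ε_L ε_R ρ_L ρ_R : ℝ) (hεL : 0 ≤ ε_L) (hεR : 0 ≤ ε_R)
    (hρL : ρ_L ∈ Set.Icc 0 (ρ_j / (1 + ε_L))) (hρR : ρ_R ∈ Set.Icc 0 (ρ_j / (1 + ε_R)))
    (h1 : Γ ε_L < ρ_L) (h2 : Γ ε_R < ρ_R) (h3 : Q ε_R ρ_R ≤ Q ε_L ρ_L) :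
    min (D ε_L ρ_L) (S ε_R ρ_R) = Q ε_R ρ_R := by
  have hεR1 : (0:ℝ) < 1 + ε_R := by linarith
  have hεL1 : (0:ℝ) < 1 + ε_L := by linarith
  have key : ∀ ε : ℝ, 0 < 1 + ε → ∀ a b : ℝ, Γ ε ≤ a → a ≤ b → b ≤ ρ_j / (1 + ε) →
      Q ε b ≤ Q ε a := by
    intro ε hε a b ha hab hb
    rw [hQ, hQ]
    have h1a : ρ_c ≤ (1 + ε) * a := by
      rw [hΓ, div_le_iff₀ hε] at ha; linarith
    have h2b : (1 + ε) * b ≤ ρ_j := by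
      rw [le_div_iff₀ hε] at hb; linarith
    have hmem_a : (1 + ε) * a ∈ Set.Icc ρ_c ρ_j := by
      constructor
      · exact h1a
      · nlinarith
    have hmem_b : (1 + ε) * b ∈ Set.Icc ρ_c ρ_j := by
      constructor
      · nlinarith
      · exact h2b
    have hab' : (1 + ε) * a ≤ (1 + ε) * b := by nlinarith
    have := hanti hmem_a hmem_b hab'
    simp only at this
    nlinarith
  have hSR : S ε_R ρ_R = Q ε_R ρ_R := by
    rw [hS]
    apply IsGreatest.csSup_eq
    constructor
    · exact ⟨ρ_R, ⟨le_refl _, hρR.2⟩, rfl⟩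
    · rintro x ⟨r, ⟨hr1, hr2⟩, rfl⟩
      exact key ε_R hεR1 ρ_R r h2.le hr1 hr2
  have hQLcont : Continuous (Q ε_L) := by
    have : Q ε_L = fun ρ => ρ * V ((1 + ε_L) * ρ) := funext (hQ ε_L)
    rw [this]
    exact continuous_id.mul (hVcont.comp (continuous_const.mul continuous_id))
  have hDL : Q ε_L ρ_L ≤ D ε_L ρ_L := by
    rw [hD]
    apply le_csSup
    · exact isCompact_Icc.bddAbove_image hQLcont.continuousOn
    · exact ⟨ρ_L, ⟨hρL.1, le_refl _⟩, rfl⟩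
  rw [hSR]
  exact min_eq_right (h3.trans hDL)
end

section
/- (Boundary flux for Riemann problem of Type 6.) If ρ_L > Γ(ε_L), ρ_R > Γ(ε_R), and Q(ε_L, ρ_L) < Q(ε_R, ρ_R) ≤ cap(ε_L), then min{D(ε_L, ρ_L), S(ε_R, ρ_R)} = Q(ε_R, ρ_R). -/
theorem riemann_flux_type6
    (v_f ρ_j ρ_c : ℝ) (hvf : 0 < v_f) (hρj : 0 < ρ_j) (hρc : ρ_c ∈ Set.Ioo 0 ρ_j)
    (V : ℝ → ℝ) (hVcont : Continuous V) (hV0 : V 0 = v_f) (hVj : V ρ_j = 0)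
    (hmono : MonotoneOn (fun r : ℝ => r * V r) (Set.Icc 0 ρ_c))
    (hanti : AntitoneOn (fun r : ℝ => r * V r) (Set.Icc ρ_c ρ_j))
    (Q : ℝ → ℝ → ℝ) (hQ : ∀ ε ρ, Q ε ρ = ρ * V ((1 + ε) * ρ))
    (Γ : ℝ → ℝ) (hΓ : ∀ ε, Γ ε = ρ_c / (1 + ε))
    (cap : ℝ → ℝ) (hcap : ∀ ε, cap ε = Q ε (Γ ε))
    (S D : ℝ → ℝ → ℝ)
    (hS : ∀ ε ρ, S ε ρ = sSup (Q ε '' Set.Icc ρ (ρ_j / (1 + ε))))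
    (hD : ∀ ε ρ, D ε ρ = sSup (Q ε '' Set.Icc 0 ρ))
    (ε_L ε_R ρ_L ρ_R : ℝ) (hεL : 0 ≤ ε_L) (hεR : 0 ≤ ε_R)
    (hρL : ρ_L ∈ Set.Icc 0 (ρ_j / (1 + ε_L))) (hρR : ρ_R ∈ Set.Icc 0 (ρ_j / (1 + ε_R)))
    (h1 : Γ ε_L < ρ_L) (h2 : Γ ε_R < ρ_R)
    (h3 : Q ε_L ρ_L < Q ε_R ρ_R) (h4 : Q ε_R ρ_R ≤ cap ε_L) :
    min (D ε_L ρ_L) (S ε_R ρ_R) = Q ε_R ρ_R := by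
  obtain ⟨hρc0, hρcj⟩ := hρc
  have hcpos : ∀ ε : ℝ, 0 ≤ ε → (0:ℝ) < 1 + ε := fun ε hε => by linarith
  -- Q ε r ≤ Q ε (Γ ε) for all admissible r
  have key1 : ∀ ε : ℝ, 0 ≤ ε → ∀ r ∈ Set.Icc (0:ℝ) (ρ_j / (1 + ε)),
      Q ε r ≤ Q ε (Γ ε) := by
    intro ε hε r hr
    have hc := hcpos ε hε
    have hΓe : (1 + ε) * Γ ε = ρ_c := by rw [hΓ]; field_simp
    have hrj : (1 + ε) * r ≤ ρ_j := by
      have := (le_div_iff₀ hc).mp hr.2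
      nlinarith
    rw [hQ, hQ, hΓe]
    rcases le_or_gt r (Γ ε) with h | h
    · have h1 : (1 + ε) * r ≤ ρ_c := by rw [← hΓe]; nlinarith
      have h2 : (0:ℝ) ≤ (1 + ε) * r := by nlinarith [hr.1]
      have := hmono (Set.mem_Icc.mpr ⟨h2, h1⟩) (Set.mem_Icc.mpr ⟨le_of_lt hρc0, le_refl _⟩) h1
      simp only at this
      rw [hΓ, div_mul_eq_mul_div, le_div_iff₀ hc]
      have e : r * V ((1 + ε) * r) * (1 + ε) = (1 + ε) * r * V ((1 + ε) * r) := by ring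
      linarith [e ▸ this]
    · have h1 : ρ_c ≤ (1 + ε) * r := by rw [← hΓe]; nlinarith
      have := hanti (Set.mem_Icc.mpr ⟨le_refl _, le_of_lt hρcj⟩)
        (Set.mem_Icc.mpr ⟨h1, hrj⟩) h1
      simp only at this
      rw [hΓ, div_mul_eq_mul_div, le_div_iff₀ hc]
      have e : r * V ((1 + ε) * r) * (1 + ε) = (1 + ε) * r * V ((1 + ε) * r) := by ring
      linarith [e ▸ this]
  -- Q ε antitone on [Γ ε, ρ_j/(1+ε)]
  have key2 : ∀ ε : ℝ, 0 ≤ ε → ∀ a b : ℝ, Γ ε ≤ a → a ≤ b → b ≤ ρ_j / (1 + ε) →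
      Q ε b ≤ Q ε a := by
    intro ε hε a b ha hab hb
    have hc := hcpos ε hε
    have hΓe : (1 + ε) * Γ ε = ρ_c := by rw [hΓ]; field_simp
    have h1 : ρ_c ≤ (1 + ε) * a := by rw [← hΓe]; nlinarith
    have h2 : (1 + ε) * a ≤ (1 + ε) * b := by nlinarith
    have h3' : (1 + ε) * b ≤ ρ_j := by
      have := (le_div_iff₀ hc).mp hb
      nlinarith
    have := hanti (Set.mem_Icc.mpr ⟨h1, le_trans h2 h3'⟩)
      (Set.mem_Icc.mpr ⟨le_trans h1 h2, h3'⟩) h2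
    simp only at this
    rw [hQ, hQ]
    nlinarith
  have hcL := hcpos ε_L hεL
  have hcR := hcpos ε_R hεR
  have hΓLpos : 0 < Γ ε_L := by rw [hΓ]; positivity
  -- D ε_L ρ_L = cap ε_L
  have hDval : D ε_L ρ_L = cap ε_L := by
    rw [hD, hcap]
    apply IsGreatest.csSup_eq
    constructor
    · exact ⟨Γ ε_L, Set.mem_Icc.mpr ⟨le_of_lt hΓLpos, le_of_lt h1⟩, rfl⟩
    · rintro y ⟨r, hr, rfl⟩
      exact key1 ε_L hεL r ⟨hr.1, le_trans hr.2 hρL.2⟩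
  -- S ε_R ρ_R = Q ε_R ρ_R
  have hSval : S ε_R ρ_R = Q ε_R ρ_R := by
    rw [hS]
    apply IsGreatest.csSup_eq
    constructor
    · exact ⟨ρ_R, Set.mem_Icc.mpr ⟨le_refl _, hρR.2⟩, rfl⟩
    · rintro y ⟨r, hr, rfl⟩
      exact key2 ε_R hεR ρ_R r (le_of_lt h2) hr.1 hr.2
  rw [hDval, hSval]
  exact min_eq_right h4
end

section
/- (Boundary flux for Riemann problem of Type 7.) If ρ_L > Γ(ε_L), ρ_R ≤ Γ(ε_R), and Q(ε_R, ρ_R) ≤ cap(ε_L) ≤ cap(ε_R), then min{D(ε_L, ρ_L), S(ε_R, ρ_R)} = cap(ε_L). -/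
lemma key_bound (ρ_j ρ_c : ℝ) (hρj : 0 < ρ_j) (hρc : ρ_c ∈ Set.Ioo 0 ρ_j)
    (V : ℝ → ℝ)
    (hmono : MonotoneOn (fun r : ℝ => r * V r) (Set.Icc 0 ρ_c))
    (hanti : AntitoneOn (fun r : ℝ => r * V r) (Set.Icc ρ_c ρ_j))
    (ε : ℝ) (hε : 0 ≤ ε) (r : ℝ) (hr0 : 0 ≤ r) (hrj : r ≤ ρ_j / (1 + ε)) :
    r * V ((1 + ε) * r) ≤ (ρ_c / (1 + ε)) * V ((1 + ε) * (ρ_c / (1 + ε))) := by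
  have hεp : (0 : ℝ) < 1 + ε := by linarith
  have hΓ : (1 + ε) * (ρ_c / (1 + ε)) = ρ_c := by field_simp
  rw [hΓ]
  set s := (1 + ε) * r with hs
  have hs0 : 0 ≤ s := by positivity
  have hsj : s ≤ ρ_j := by
    rw [hs]
    calc (1 + ε) * r ≤ (1 + ε) * (ρ_j / (1 + ε)) := by
          exact mul_le_mul_of_nonneg_left hrj (le_of_lt hεp)
      _ = ρ_j := by field_simp
  have hkey : s * V s ≤ ρ_c * V ρ_c := by
    rcases le_or_gt s ρ_c with h | h
    · exact hmono ⟨hs0, h⟩ ⟨le_of_lt hρc.1, le_refl _⟩ h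
    · exact hanti ⟨le_refl _, le_of_lt hρc.2⟩ ⟨le_of_lt h, hsj⟩ (le_of_lt h)
  have hr : r = s / (1 + ε) := by rw [hs]; field_simp
  rw [hr]
  rw [div_mul_eq_mul_div, div_mul_eq_mul_div]
  exact div_le_div_of_nonneg_right hkey hεp.le

theorem riemann_flux_type7
    (v_f ρ_j ρ_c : ℝ) (hvf : 0 < v_f) (hρj : 0 < ρ_j) (hρc : ρ_c ∈ Set.Ioo 0 ρ_j)
    (V : ℝ → ℝ) (hVcont : Continuous V) (hV0 : V 0 = v_f) (hVj : V ρ_j = 0)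
    (hmono : MonotoneOn (fun r : ℝ => r * V r) (Set.Icc 0 ρ_c))
    (hanti : AntitoneOn (fun r : ℝ => r * V r) (Set.Icc ρ_c ρ_j))
    (Q : ℝ → ℝ → ℝ) (hQ : ∀ ε ρ, Q ε ρ = ρ * V ((1 + ε) * ρ))
    (Γ : ℝ → ℝ) (hΓ : ∀ ε, Γ ε = ρ_c / (1 + ε))
    (cap : ℝ → ℝ) (hcap : ∀ ε, cap ε = Q ε (Γ ε))
    (S D : ℝ → ℝ → ℝ)
    (hS : ∀ ε ρ, S ε ρ = sSup (Q ε '' Set.Icc ρ (ρ_j / (1 + ε))))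
    (hD : ∀ ε ρ, D ε ρ = sSup (Q ε '' Set.Icc 0 ρ))
    (ε_L ε_R ρ_L ρ_R : ℝ) (hεL : 0 ≤ ε_L) (hεR : 0 ≤ ε_R)
    (hρL : ρ_L ∈ Set.Icc 0 (ρ_j / (1 + ε_L))) (hρR : ρ_R ∈ Set.Icc 0 (ρ_j / (1 + ε_R)))
    (h1 : Γ ε_L < ρ_L) (h2 : ρ_R ≤ Γ ε_R)
    (h3 : Q ε_R ρ_R ≤ cap ε_L) (h4 : cap ε_L ≤ cap ε_R) :
    min (D ε_L ρ_L) (S ε_R ρ_R) = cap ε_L := by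
  have hεLp : (0 : ℝ) < 1 + ε_L := by linarith
  have hεRp : (0 : ℝ) < 1 + ε_R := by linarith
  have hΓL0 : 0 ≤ Γ ε_L := by rw [hΓ]; exact div_nonneg hρc.1.le (by linarith)
  have hΓR0 : 0 ≤ Γ ε_R := by rw [hΓ]; exact div_nonneg hρc.1.le (by linarith)
  have hΓRj : Γ ε_R ≤ ρ_j / (1 + ε_R) := by
    rw [hΓ]; exact div_le_div_of_nonneg_right (le_of_lt hρc.2) hεRp.le
  have hDval : D ε_L ρ_L = cap ε_L := by
    rw [hD]
    apply IsGreatest.csSup_eq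
    constructor
    · exact ⟨Γ ε_L, ⟨hΓL0, le_of_lt h1⟩, by rw [hcap]⟩
    · rintro x ⟨r, ⟨hr0, hrL⟩, rfl⟩
      rw [hcap, hQ, hQ, hΓ]
      exact key_bound ρ_j ρ_c hρj hρc V hmono hanti ε_L hεL r hr0 (hrL.trans hρL.2)
  have hSval : S ε_R ρ_R = cap ε_R := by
    rw [hS]
    apply IsGreatest.csSup_eq
    constructor
    · exact ⟨Γ ε_R, ⟨h2, hΓRj⟩, by rw [hcap]⟩
    · rintro x ⟨r, ⟨hrR, hrj⟩, rfl⟩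
      rw [hcap, hQ, hQ, hΓ]
      exact key_bound ρ_j ρ_c hρj hρc V hmono hanti ε_R hεR r (hρR.1.trans hrR) hrj
  rw [hDval, hSval]
  exact min_eq_left h4
end

section
/- (Boundary flux for Riemann problem of Type 9.) If ρ_L > Γ(ε_L), ρ_R ≤ Γ(ε_R), and cap(ε_R) < Q(ε_L, ρ_L), then min{D(ε_L, ρ_L), S(ε_R, ρ_R)} = cap(ε_R). -/
theorem riemann_flux_type9
    (v_f ρ_j ρ_c : ℝ) (hvf : 0 < v_f) (hρj : 0 < ρ_j) (hρc : ρ_c ∈ Set.Ioo 0 ρ_j)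
    (V : ℝ → ℝ) (hVcont : Continuous V) (hV0 : V 0 = v_f) (hVj : V ρ_j = 0)
    (hmono : MonotoneOn (fun r : ℝ => r * V r) (Set.Icc 0 ρ_c))
    (hanti : AntitoneOn (fun r : ℝ => r * V r) (Set.Icc ρ_c ρ_j))
    (Q : ℝ → ℝ → ℝ) (hQ : ∀ ε ρ, Q ε ρ = ρ * V ((1 + ε) * ρ))
    (Γ : ℝ → ℝ) (hΓ : ∀ ε, Γ ε = ρ_c / (1 + ε))
    (cap : ℝ → ℝ) (hcap : ∀ ε, cap ε = Q ε (Γ ε))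
    (S D : ℝ → ℝ → ℝ)
    (hS : ∀ ε ρ, S ε ρ = sSup (Q ε '' Set.Icc ρ (ρ_j / (1 + ε))))
    (hD : ∀ ε ρ, D ε ρ = sSup (Q ε '' Set.Icc 0 ρ))
    (ε_L ε_R ρ_L ρ_R : ℝ) (hεL : 0 ≤ ε_L) (hεR : 0 ≤ ε_R)
    (hρL : ρ_L ∈ Set.Icc 0 (ρ_j / (1 + ε_L))) (hρR : ρ_R ∈ Set.Icc 0 (ρ_j / (1 + ε_R)))
    (h1 : Γ ε_L < ρ_L) (h2 : ρ_R ≤ Γ ε_R) (h3 : cap ε_R < Q ε_L ρ_L) :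
    min (D ε_L ρ_L) (S ε_R ρ_R) = cap ε_R := by
  obtain ⟨hρc0, hρcj⟩ := hρc
  have hbar : ∀ s ∈ Set.Icc (0:ℝ) ρ_j, s * V s ≤ ρ_c * V ρ_c := by
    intro s hs
    rcases le_or_gt s ρ_c with h | h
    · exact hmono ⟨hs.1, h⟩ ⟨hρc0.le, le_refl _⟩ h
    · exact hanti ⟨le_refl _, hρcj.le⟩ ⟨h.le, hs.2⟩ h.le
  have key : ∀ ε r, 0 ≤ ε → r ∈ Set.Icc 0 (ρ_j / (1+ε)) → Q ε r ≤ cap ε := by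
    intro ε r hε hr
    have h1ε : (0:ℝ) < 1 + ε := by linarith
    have hs : (1+ε)*r ∈ Set.Icc (0:ℝ) ρ_j := by
      refine ⟨mul_nonneg h1ε.le hr.1, ?_⟩
      have := (le_div_iff₀ h1ε).mp hr.2
      linarith
    have hb := hbar _ hs
    have hΓs : (1 + ε) * (ρ_c / (1 + ε)) = ρ_c := by field_simp
    rw [hQ, hcap, hQ, hΓ, hΓs, div_mul_eq_mul_div, le_div_iff₀ h1ε]
    nlinarith [hb]
  have h1εR : (0:ℝ) < 1 + ε_R := by linarith
  have hmem : Γ ε_R ∈ Set.Icc ρ_R (ρ_j / (1 + ε_R)) := by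
    refine ⟨h2, ?_⟩
    rw [hΓ]
    gcongr
  have hubS : ∀ x ∈ Q ε_R '' Set.Icc ρ_R (ρ_j / (1 + ε_R)), x ≤ cap ε_R := by
    rintro x ⟨r, hr, rfl⟩
    exact key _ _ hεR ⟨le_trans hρR.1 hr.1, hr.2⟩
  have himg : cap ε_R ∈ Q ε_R '' Set.Icc ρ_R (ρ_j / (1 + ε_R)) :=
    ⟨Γ ε_R, hmem, (hcap ε_R).symm⟩
  have hSR : S ε_R ρ_R = cap ε_R := by
    rw [hS]
    exact le_antisymm (csSup_le ⟨_, himg⟩ hubS) (le_csSup ⟨cap ε_R, hubS⟩ himg)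
  have hubD : ∀ x ∈ Q ε_L '' Set.Icc 0 ρ_L, x ≤ cap ε_L := by
    rintro x ⟨r, hr, rfl⟩
    exact key _ _ hεL ⟨hr.1, le_trans hr.2 hρL.2⟩
  have hQL : Q ε_L ρ_L ≤ D ε_L ρ_L := by
    rw [hD]
    exact le_csSup ⟨cap ε_L, hubD⟩ ⟨ρ_L, ⟨hρL.1, le_refl _⟩, rfl⟩
  rw [hSR]
  exact min_eq_right (le_of_lt (lt_of_lt_of_le h3 hQL))
end

section
/- Let v_f > 0, c > 0, and ρ_j > 0, and define the maximum sensitivity speed-density function V(ρ) = v_f·(1 − exp(1 − exp((c/v_f)·(ρ_j/ρ − 1)))) for ρ > 0. Then V is strictly decreasing on (0, ∞), V(ρ_j) = 0, and V(ρ) → v_f as ρ → 0⁺. -/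
/-- The maximum sensitivity speed-density function
`V(ρ) = v_f·(1 − exp(1 − exp((c/v_f)·(ρ_j/ρ − 1))))` (for `ρ > 0`) is strictly decreasing
on `(0, ∞)`, vanishes at the jam density `ρ_j`, and tends to the free-flow speed `v_f` as
`ρ → 0⁺`. -/
theorem max_sensitivity_model_properties
    (v_f c ρ_j : ℝ) (hvf : 0 < v_f) (hc : 0 < c) (hρj : 0 < ρ_j)
    (V : ℝ → ℝ)
    (hV : ∀ ρ : ℝ, 0 < ρ →
      V ρ = v_f * (1 - Real.exp (1 - Real.exp (c / v_f * (ρ_j / ρ - 1))))) :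
    StrictAntiOn V (Set.Ioi 0) ∧ V ρ_j = 0 ∧
    Filter.Tendsto V (nhdsWithin 0 (Set.Ioi 0)) (nhds v_f) := by
  refine ⟨?_, ?_, ?_⟩
  · intro a ha b hb hab
    simp only [Set.mem_Ioi] at ha hb
    rw [hV a ha, hV b hb]
    have h1 : ρ_j / b < ρ_j / a := by
      apply div_lt_div_of_pos_left hρj ha hab
    have h2 : c / v_f * (ρ_j / b - 1) < c / v_f * (ρ_j / a - 1) := by
      apply mul_lt_mul_of_pos_left (by linarith) (div_pos hc hvf)
    have h3 : Real.exp (c / v_f * (ρ_j / b - 1)) < Real.exp (c / v_f * (ρ_j / a - 1)) :=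
      Real.exp_lt_exp.mpr h2
    have h4 : Real.exp (1 - Real.exp (c / v_f * (ρ_j / a - 1))) <
        Real.exp (1 - Real.exp (c / v_f * (ρ_j / b - 1))) :=
      Real.exp_lt_exp.mpr (by linarith)
    nlinarith
  · rw [hV ρ_j hρj, div_self hρj.ne']
    simp
  · have h1 : Filter.Tendsto (fun ρ : ℝ => ρ_j / ρ) (nhdsWithin 0 (Set.Ioi 0))
        Filter.atTop := by
      simp only [div_eq_mul_inv]
      exact tendsto_inv_nhdsGT_zero.const_mul_atTop hρj
    have h2 : Filter.Tendsto (fun ρ : ℝ => c / v_f * (ρ_j / ρ - 1))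
        (nhdsWithin 0 (Set.Ioi 0)) Filter.atTop :=
      (Filter.tendsto_atTop_add_const_right _ (-1) h1).const_mul_atTop (div_pos hc hvf)
    have h3 : Filter.Tendsto (fun ρ : ℝ => 1 - Real.exp (c / v_f * (ρ_j / ρ - 1)))
        (nhdsWithin 0 (Set.Ioi 0)) Filter.atBot := by
      apply Filter.tendsto_atBot_add_const_left
      exact Filter.tendsto_neg_atTop_atBot.comp (Real.tendsto_exp_atTop.comp h2)
    have h4 : Filter.Tendsto (fun ρ : ℝ => Real.exp (1 - Real.exp (c / v_f * (ρ_j / ρ - 1))))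
        (nhdsWithin 0 (Set.Ioi 0)) (nhds 0) := Real.tendsto_exp_atBot.comp h3
    have key : Filter.Tendsto (fun ρ : ℝ => v_f * (1 - Real.exp (1 -
        Real.exp (c / v_f * (ρ_j / ρ - 1))))) (nhdsWithin 0 (Set.Ioi 0)) (nhds v_f) := by
      have h5 := ((tendsto_const_nhds (x := (1:ℝ))).sub h4).const_mul v_f
      simpa using h5
    exact key.congr' (by
      filter_upwards [self_mem_nhdsWithin] with ρ hρ using (hV ρ hρ).symm)
end
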